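/- Let K be a field of characteristic zero and V a K-vector space, with ι : V → ExteriorAlgebra K V the canonical inclusion. Let σ ∈ ExteriorAlgebra K V, x, y ∈ V, ℓ ∈ K with ℓ ≠ 0, and k a natural number. Set w = ι x * ι y and suppose σ * w = w * σ, σ^(k+1) = 0, and σ^k * w ≠ 0. Then (σ + ℓ • w)^(k+1) ≠ 0. -/
import Mathlib

lemma aux_add_pow {R : Type*} [Ring R] (a b : R) (hc : a * b = b * a)
    (hb : b * b = 0) : ∀ n : ℕ, (a + b) ^ (n + 1) = a ^ (n + 1) + (n + 1) • (a ^ n * b) := by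
  intro n
  induction n with
  | zero => simp
  | succ n ih =>
      have hab : ∀ m : ℕ, b * a ^ m = a ^ m * b := fun m => by
        induction m with
        | zero => simp
        | succ m ihm =>
            rw [pow_succ, ← mul_assoc, ihm, mul_assoc, ← hc, ← mul_assoc]
      calc (a + b) ^ (n + 2) = (a + b) ^ (n + 1) * (a + b) := by rw [pow_succ]
        _ = (a ^ (n + 1) + (n + 1) • (a ^ n * b)) * (a + b) := by rw [ih]
        _ = a ^ (n + 2) + a ^ (n + 1) * b + ((n + 1) • (a ^ n * (b * a))
              + (n + 1) • (a ^ n * (b * b))) := by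
            rw [add_mul, mul_add, mul_add, smul_mul_assoc, smul_mul_assoc,
              pow_succ, mul_assoc, mul_assoc]
            ring_nf
            simp [pow_succ, mul_assoc, Nat.add_comm]
            rw [show n + 2 = n + 1 + 1 from rfl, pow_succ, pow_succ, mul_assoc]
        _ = a ^ (n + 2) + (n + 2) • (a ^ (n + 1) * b) := by
            rw [hb, ← hc, mul_zero, smul_zero, add_zero, ← mul_assoc, ← pow_succ,
              add_assoc, succ_nsmul (a ^ (n+1) * b) (n+1), add_comm (a^(n+1) * b)]

/-- Over a field of characteristic zero, if `w = ι x * ι y` commutes with `σ`,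
`σ^(k+1) = 0`, `σ^k * w ≠ 0` and `ℓ ≠ 0`, then `(σ + ℓ • w)^(k+1) ≠ 0`. -/
theorem stmt_7 {K V : Type*} [Field K] [CharZero K] [AddCommGroup V] [Module K V]
    (σ : ExteriorAlgebra K V) (x y : V) (ℓ : K) (hℓ : ℓ ≠ 0) (k : ℕ)
    (w : ExteriorAlgebra K V) (hw : w = ExteriorAlgebra.ι K x * ExteriorAlgebra.ι K y)
    (hcomm : σ * w = w * σ) (hσ : σ ^ (k + 1) = 0) (hne : σ ^ k * w ≠ 0) :
    (σ + ℓ • w) ^ (k + 1) ≠ 0 := by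
  have hyx : ExteriorAlgebra.ι K y * ExteriorAlgebra.ι K x
      = -(ExteriorAlgebra.ι K x * ExteriorAlgebra.ι K y) := by
    exact eq_neg_of_add_eq_zero_right (ExteriorAlgebra.ι_add_mul_swap (R := K) x y)
  have hww : w * w = 0 := by
    rw [hw, mul_assoc, ← mul_assoc (ExteriorAlgebra.ι K y), hyx]
    simp [ExteriorAlgebra.ι_sq_zero, mul_assoc]
  have hc : σ * (ℓ • w) = (ℓ • w) * σ := by
    rw [mul_smul_comm, smul_mul_assoc, hcomm]
  have hb : (ℓ • w) * (ℓ • w) = 0 := by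
    rw [smul_mul_assoc, mul_smul_comm, hww, smul_zero, smul_zero]
  rw [aux_add_pow σ (ℓ • w) hc hb k, hσ, zero_add]
  have : (k + 1) • (σ ^ k * (ℓ • w)) = (((k : K) + 1) * ℓ) • (σ ^ k * w) := by
    rw [mul_smul_comm, ← Nat.cast_smul_eq_nsmul K, smul_smul]
    push_cast
    ring_nf
  rw [this]
  exact smul_ne_zero (mul_ne_zero (Nat.cast_add_one_ne_zero k) hℓ) hne
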